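/- arXiv:1906.10832 — 6 statements merged into one kernel-verified Lean document; each statement's English description precedes it below -/
import Mathlib

section
/- Every nonempty compact saturated subset E of a T0 space satisfies E = ↑Min(E): every element of E lies above some minimal element of E with respect to the specialization order. Equivalently, E = ↑C for some nonempty antichain C ⊆ E. -/
open Set

/-- The specialization order of the paper: `x ≤ y` iff `x ∈ cl {y}`. -/
def specLE {X : Type*} [TopologicalSpace X] (x y : X) : Prop := x ∈ closure ({y} : Set X)

/-- Upward closure `↑A` w.r.t. the specialization order. -/
def upSet {X : Type*} [TopologicalSpace X] (A : Set X) : Set X := {y | ∃ x ∈ A, specLE x y}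

/-- Downward closure `↓A` w.r.t. the specialization order. -/
def downSet {X : Type*} [TopologicalSpace X] (A : Set X) : Set X := {y | ∃ x ∈ A, specLE y x}

/-- The saturation of a set: the intersection of all open sets containing it. -/
def sat {X : Type*} [TopologicalSpace X] (A : Set X) : Set X := ⋂₀ {U | IsOpen U ∧ A ⊆ U}

/-- A `T0` space is well-filtered if for every filtered family `𝓕` of compact saturated
sets and every open `U` with `⋂₀ 𝓕 ⊆ U`, some member of `𝓕` is contained in `U`. -/
def WellFilteredSpace (X : Type*) [TopologicalSpace X] : Prop :=
  ∀ 𝓕 : Set (Set X), 𝓕.Nonempty →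
    (∀ K ∈ 𝓕, IsCompact K ∧ sat K = K) →
    (∀ K₁ ∈ 𝓕, ∀ K₂ ∈ 𝓕, ∃ K₃ ∈ 𝓕, K₃ ⊆ K₁ ∩ K₂) →
    ∀ U : Set X, IsOpen U → ⋂₀ 𝓕 ⊆ U → ∃ K ∈ 𝓕, K ⊆ U

lemma specLE_refl {X : Type*} [TopologicalSpace X] (x : X) : specLE x x :=
  subset_closure rfl

lemma specLE_trans {X : Type*} [TopologicalSpace X] {x y z : X}
    (h1 : specLE x y) (h2 : specLE y z) : specLE x z := by
  have hy : ({y} : Set X) ⊆ closure {z} := by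
    intro t ht; rcases ht with rfl; exact h2
  have := closure_mono hy
  rw [closure_closure] at this
  exact this h1

lemma specLE_antisymm {X : Type*} [TopologicalSpace X] [T0Space X] {x y : X}
    (h1 : specLE x y) (h2 : specLE y x) : x = y := by
  have hxy : y ⤳ x := specializes_iff_mem_closure.2 h1
  have hyx : x ⤳ y := specializes_iff_mem_closure.2 h2
  exact (hyx.antisymm hxy).eq

lemma exists_min_of_isCompact {X : Type*} [TopologicalSpace X] [T0Space X]
    {E : Set X} (hc : IsCompact E) :
    ∀ x ∈ E, ∃ m ∈ E, specLE m x ∧ ∀ z ∈ E, specLE z m → z = m := by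
  letI P : PartialOrder X :=
    { le := fun a b => specLE b a
      le_refl := fun a => specLE_refl a
      le_trans := fun a b c h1 h2 => specLE_trans h2 h1
      le_antisymm := fun a b h1 h2 => specLE_antisymm h2 h1 }
  intro x hx
  have key : ∀ c ⊆ E, IsChain (· ≤ ·) c → ∀ y ∈ c, ∃ ub ∈ E, ∀ z ∈ c, z ≤ ub := by
    intro c hcE hchain y hy
    have H : (E ∩ ⋂ i : c, closure ({(i : X)} : Set X)).Nonempty := by
      apply hc.inter_iInter_nonempty (fun i : c => closure ({(i : X)} : Set X))
        (fun _ => isClosed_closure)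
      intro u
      rcases u.eq_empty_or_nonempty with rfl | hu
      · simpa using ⟨y, hcE hy⟩
      · obtain ⟨a, hau, ha⟩ := Set.Finite.exists_maximalFor (id : X → X)
          ((fun i : c => (i : X)) '' (↑u : Set { x // x ∈ c }))
          ((u.finite_toSet).image _)
          (by obtain ⟨i, hi⟩ := hu; exact ⟨(i : X), ⟨i, hi, rfl⟩⟩)
        obtain ⟨ia, hia, rfl⟩ := hau
        have haC : (ia : X) ∈ c := ia.2
        have hmax : ∀ j : { x // x ∈ c }, j ∈ u → (j : X) ≤ (ia : X) := by
          intro j hj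
          rcases eq_or_ne (j : X) (ia : X) with h | h
          · exact h.le
          · rcases hchain j.2 haC h with h' | h'
            · exact h'
            · exact (ha ⟨j, hj, rfl⟩ h' : (j : X) ≤ (ia : X))
        refine ⟨(ia : X), hcE haC, ?_⟩
        simp only [Set.mem_iInter]
        intro j hj
        exact hmax j hj
      
    obtain ⟨m, hmE, hm⟩ := H
    refine ⟨m, hmE, ?_⟩
    intro z hz
    have := Set.mem_iInter.1 hm ⟨z, hz⟩
    exact this
  obtain ⟨m, hxm, hmE, hmax⟩ := zorn_le_nonempty₀ E key x hx
  exact ⟨m, hmE, hxm, fun z hz hzm => specLE_antisymm hzm (hmax hz hzm)⟩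


theorem stmt8 {X : Type*} [TopologicalSpace X] [T0Space X]
    (E : Set X) (hne : E.Nonempty) (hc : IsCompact E) (hs : sat E = E) :
    (∀ x ∈ E, ∃ m ∈ E, specLE m x ∧ ∀ z ∈ E, specLE z m → z = m) ∧
    ∃ C : Set X, C ⊆ E ∧ C.Nonempty ∧ IsAntichain specLE C ∧ E = upSet C := by
  have hmin := exists_min_of_isCompact hc
  refine ⟨hmin, ?_⟩
  set C : Set X := {m | m ∈ E ∧ ∀ z ∈ E, specLE z m → z = m} with hC
  have hCE : C ⊆ E := fun m hm => hm.1
  obtain ⟨x₀, hx₀⟩ := hne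
  obtain ⟨m₀, hm₀E, _, hm₀⟩ := hmin x₀ hx₀
  have hup : E = upSet C := by
    apply Set.Subset.antisymm
    · intro x hxE
      obtain ⟨m, hmE, hmx, hm⟩ := hmin x hxE
      exact ⟨m, ⟨hmE, hm⟩, hmx⟩
    · intro y hy
      obtain ⟨m, hmC, hmy⟩ := hy
      rw [← hs]
      intro U hU
      rcases hU with ⟨hUopen, hEU⟩
      have hmU : m ∈ U := hEU (hCE hmC)
      have := mem_closure_iff.1 hmy U hUopen hmU
      obtain ⟨t, htU, ht⟩ := this
      rcases ht with rfl
      exact htU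
  refine ⟨C, hCE, ⟨m₀, hm₀E, hm₀⟩, ?_, hup⟩
  intro a ha b hb hab hle
  exact hab (hb.2 a ha.1 hle)
end

section
/- Let X be a well-filtered T0 space and {K_i}_{i∈I} a filtered family of nonempty compact saturated subsets of X. Write ⋂_{i∈I} K_i = ↑C with C a nonempty antichain of minimal elements. Then for each a ∈ C, ⋂_{i∈I} ↑(↓a ∩ K_i) = ↑a. -/
open Set

/-! Let `b` lie in every `↑(↓a ∩ K i)`. Then no `↓a ∩ K i` fits inside the open set
`(↓a ∩ ↓b)ᶜ`, so by well-filteredness neither does `⋂ i, ↑(↓a ∩ K i)`: some `z ≤ a, b` lies in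
every `K i`. As `a` is minimal in `⋂ i, K i = ↑C`, this forces `a ≤ z ≤ b`. -/

section

variable {X : Type*} [TopologicalSpace X]

lemma specLE_iff_specializes {x y : X} : specLE x y ↔ y ⤳ x :=
  specializes_iff_mem_closure.symm

lemma upSet_eq_nhdsKer (A : Set X) : upSet A = nhdsKer A := by
  ext x
  simp [upSet, mem_nhdsKer_iff_specializes, specLE_iff_specializes]

lemma sat_eq_nhdsKer (A : Set X) : sat A = nhdsKer A :=
  (nhdsKer_def A).symm

lemma downSet_singleton (a : X) : downSet {a} = closure {a} := by
  ext x
  simp [downSet, specLE]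

lemma IsAntichain.specializes_of_mem_nhdsKer {C : Set X} (hC : IsAntichain specLE C) {a z : X}
    (ha : a ∈ C) (hz : z ∈ nhdsKer C) (haz : a ⤳ z) : z ⤳ a := by
  obtain ⟨c, hcC, hzc⟩ := mem_nhdsKer_iff_specializes.1 hz
  obtain rfl : c = a := hC.eq hcC ha (specLE_iff_specializes.2 (haz.trans hzc))
  exact hzc

namespace WellFilteredSpace

lemma exists_subset_of_iInter_nhdsKer_subset (hwf : WellFilteredSpace X) {ι : Type*} [Nonempty ι]
    {L : ι → Set X} (hc : ∀ i, IsCompact (L i)) (hdir : Directed (· ⊇ ·) L) {U : Set X}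
    (hU : IsOpen U) (h : ⋂ i, nhdsKer (L i) ⊆ U) : ∃ i, L i ⊆ U := by
  obtain ⟨_, ⟨i, rfl⟩, hiU⟩ := hwf (range fun i ↦ nhdsKer (L i)) (range_nonempty _)
    (by
      rintro _ ⟨i, rfl⟩
      exact ⟨IsCompact.nhdsKer_iff.2 (hc i), by rw [sat_eq_nhdsKer, nhdsKer_nhdsKer]⟩)
    (by
      rintro _ ⟨i, rfl⟩ _ ⟨j, rfl⟩
      obtain ⟨k, hki, hkj⟩ := hdir i j
      exact ⟨_, ⟨k, rfl⟩, subset_inter (nhdsKer_mono hki) (nhdsKer_mono hkj)⟩)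
    U hU (by rwa [sInter_range])
  exact ⟨i, subset_nhdsKer.trans hiU⟩

theorem iInter_nhdsKer_closure_inter_eq (hwf : WellFilteredSpace X) {ι : Type*} [Nonempty ι]
    {K : ι → Set X} (hc : ∀ i, IsCompact (K i)) (hs : ∀ i, nhdsKer (K i) = K i)
    (hdir : Directed (· ⊇ ·) K) {a : X} (ha : a ∈ ⋂ i, K i)
    (hmin : ∀ z ∈ ⋂ i, K i, a ⤳ z → z ⤳ a) :
    ⋂ i, nhdsKer (closure {a} ∩ K i) = nhdsKer {a} := by
  refine Subset.antisymm (fun b hb ↦ ?_) fun b hba ↦ mem_iInter.2 fun i ↦ ?_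
  · have hnot : ¬ ⋂ i, nhdsKer (closure {a} ∩ K i) ⊆ (closure {a} ∩ closure {b})ᶜ := by
      intro h
      obtain ⟨i, hi⟩ := hwf.exists_subset_of_iInter_nhdsKer_subset
        (fun i ↦ (hc i).inter_left isClosed_closure)
        (hdir.mono_comp _ fun _ _ ↦ inter_subset_inter_right _)
        (isClosed_closure.inter isClosed_closure).isOpen_compl h
      obtain ⟨x, hx, hbx⟩ := mem_nhdsKer_iff_specializes.1 (mem_iInter.1 hb i)
      exact hi hx ⟨hx.1, specializes_iff_mem_closure.1 hbx⟩
    obtain ⟨z, hz, hzab⟩ := not_subset.1 hnot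
    obtain ⟨haz, hbz⟩ := not_not.1 hzab
    have hzK : z ∈ ⋂ i, K i := mem_iInter.2 fun i ↦
      hs i ▸ nhdsKer_mono inter_subset_right (mem_iInter.1 hz i)
    exact mem_nhdsKer_singleton.2 <| (specializes_iff_mem_closure.2 hbz).trans <|
      hmin z hzK (specializes_iff_mem_closure.2 haz)
  · exact mem_nhdsKer_iff_specializes.2 ⟨a, ⟨subset_closure rfl, mem_iInter.1 ha i⟩,
      mem_nhdsKer_singleton.1 hba⟩

end WellFilteredSpace

end

theorem stmt9_general {X : Type*} [TopologicalSpace X]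
    (hwf : WellFilteredSpace X) {ι : Type*} [Nonempty ι] (K : ι → Set X)
    (hc : ∀ i, IsCompact (K i)) (hs : ∀ i, sat (K i) = K i)
    (hfil : ∀ i j : ι, ∃ k : ι, K k ⊆ K i ∩ K j)
    (C : Set X) (hCanti : IsAntichain specLE C)
    (hC : ⋂ i, K i = upSet C) :
    ∀ a ∈ C, ⋂ i, upSet (downSet {a} ∩ K i) = upSet {a} := by
  intro a ha
  simp only [upSet_eq_nhdsKer, downSet_singleton] at hC ⊢
  have hdir : Directed (· ⊇ ·) K := fun i j ↦
    let ⟨k, hk⟩ := hfil i j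
    ⟨k, hk.trans inter_subset_left, hk.trans inter_subset_right⟩
  exact hwf.iInter_nhdsKer_closure_inter_eq hc (fun i ↦ sat_eq_nhdsKer (K i) ▸ hs i) hdir
    (hC ▸ subset_nhdsKer ha) fun z hz ↦ hCanti.specializes_of_mem_nhdsKer ha (hC ▸ hz)

theorem stmt9 {X : Type*} [TopologicalSpace X] [T0Space X]
    (hwf : WellFilteredSpace X) {ι : Type*} [Nonempty ι] (K : ι → Set X)
    (hne : ∀ i, (K i).Nonempty) (hc : ∀ i, IsCompact (K i)) (hs : ∀ i, sat (K i) = K i)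
    (hfil : ∀ i j : ι, ∃ k : ι, K k ⊆ K i ∩ K j)
    (C : Set X) (hCne : C.Nonempty) (hCanti : IsAntichain specLE C)
    (hC : ⋂ i, K i = upSet C) :
    ∀ a ∈ C, ⋂ i, upSet (downSet {a} ∩ K i) = upSet {a} :=
  stmt9_general hwf K hc hs hfil C hCanti hC
end

section
/- (Topological Rudin Lemma) Let X be a topological space and 𝓕 a filtered family of compact subsets of X (for any F₁, F₂ ∈ 𝓕 there is F ∈ 𝓕 with F ⊆ ↑F₁ ∩ ↑F₂). Any closed set C ⊆ X that meets every member of 𝓕 contains a minimal irreducible closed subset A that still meets every member of 𝓕; minimality means any proper closed subset of A misses some member of 𝓕. -/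
open Set

/-!
A chain of closed sets each meeting a compact set `F` has an intersection still meeting `F`, so by
Zorn's lemma `C` contains a minimal closed set `A` meeting every member of `𝓕`. If `A` were covered
by closed `Z₁, Z₂` without lying in either, minimality would give members `G₁, G₂` of `𝓕` missing
`A ∩ Z₁` and `A ∩ Z₂`. A point `x ∈ A` of some `G ⊆ ↑G₁ ∩ ↑G₂` lies in, say, `Z₁`, and then the
points of `G₁` below `x` lie in the closed set `A ∩ Z₁`, a contradiction.
-/

theorem IsCompact.inter_sInter_nonempty_of_directedOn {X : Type*} [TopologicalSpace X]
    {K : Set X} (hK : IsCompact K) {c : Set (Set X)} (hne : c.Nonempty)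
    (hdir : DirectedOn (· ⊇ ·) c) (hcl : ∀ s ∈ c, IsClosed s)
    (hmeets : ∀ s ∈ c, (s ∩ K).Nonempty) : (⋂₀ c ∩ K).Nonempty := by
  have : Nonempty c := hne.to_subtype
  rw [nonempty_iff_ne_empty, inter_comm, sInter_eq_iInter]
  intro hempty
  obtain ⟨⟨s, hs⟩, hKs⟩ := hK.elim_directed_family_closed (fun s : c => (s : Set X))
    (fun s => hcl s s.2) hempty hdir.directed_val
  exact (hmeets s hs).ne_empty (inter_comm s K ▸ hKs)

theorem IsClosed.inter_nonempty_of_inter_upSet_nonempty {X : Type*} [TopologicalSpace X]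
    {Z F : Set X} (hZ : IsClosed Z) (h : (Z ∩ upSet F).Nonempty) : (Z ∩ F).Nonempty := by
  obtain ⟨x, hxZ, y, hyF, hyx⟩ := h
  exact ⟨y, hZ.closure_subset_iff.mpr (singleton_subset_iff.mpr hxZ) hyx, hyF⟩

section MeetsAll

variable {X : Type*} [TopologicalSpace X] {𝓕 : Set (Set X)}

def MeetsAll (𝓕 : Set (Set X)) (A : Set X) : Prop := ∀ F ∈ 𝓕, (A ∩ F).Nonempty

theorem exists_minimal_isClosed_meetsAll_subset (hc : ∀ F ∈ 𝓕, IsCompact F) {C : Set X}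
    (hC : IsClosed C) (hmeets : MeetsAll 𝓕 C) :
    ∃ A ⊆ C, Minimal (fun A => IsClosed A ∧ MeetsAll 𝓕 A) A := by
  refine zorn_superset_nonempty {A | IsClosed A ∧ MeetsAll 𝓕 A}
    (fun c hcS hchain hne => ⟨⋂₀ c, ⟨?_, ?_⟩, fun s hs => sInter_subset_of_mem hs⟩) C ⟨hC, hmeets⟩
  · exact isClosed_sInter fun s hs => (hcS hs).1
  · intro F hF
    have hdir : IsChain (· ⊇ ·) c := hchain.symm
    exact (hc F hF).inter_sInter_nonempty_of_directedOn hne hdir.directedOn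
      (fun s hs => (hcS hs).1) fun s hs => (hcS hs).2 F hF

theorem exists_eq_empty_of_minimal_meetsAll {A A' : Set X}
    (hA : Minimal (fun A => IsClosed A ∧ MeetsAll 𝓕 A) A) (hA'A : A' ⊆ A) (hA' : IsClosed A')
    (hne : A' ≠ A) : ∃ F ∈ 𝓕, A' ∩ F = ∅ := by
  by_contra! h
  exact hne (hA.eq_of_subset ⟨hA', h⟩ hA'A)

theorem isIrreducible_of_minimal_meetsAll (h𝓕 : 𝓕.Nonempty)
    (hfil : ∀ F₁ ∈ 𝓕, ∀ F₂ ∈ 𝓕, ∃ F ∈ 𝓕, F ⊆ upSet F₁ ∩ upSet F₂) {A : Set X}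
    (hA : Minimal (fun A => IsClosed A ∧ MeetsAll 𝓕 A) A) : IsIrreducible A := by
  obtain ⟨hAcl, hAmeets⟩ := hA.prop
  refine ⟨(hAmeets _ h𝓕.some_mem).mono inter_subset_left, ?_⟩
  rw [isPreirreducible_iff_isClosed_union_isClosed]
  intro Z₁ Z₂ hZ₁ hZ₂ hsub
  by_contra! hnot
  obtain ⟨G₁, hG₁, hmiss₁⟩ := exists_eq_empty_of_minimal_meetsAll hA inter_subset_left
    (hAcl.inter hZ₁) fun h => hnot.1 (h ▸ inter_subset_right)
  obtain ⟨G₂, hG₂, hmiss₂⟩ := exists_eq_empty_of_minimal_meetsAll hA inter_subset_left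
    (hAcl.inter hZ₂) fun h => hnot.2 (h ▸ inter_subset_right)
  obtain ⟨G, hG, hGup⟩ := hfil G₁ hG₁ G₂ hG₂
  obtain ⟨x, hxA, hxG⟩ := hAmeets G hG
  rcases hsub hxA with hx | hx
  · exact ((hAcl.inter hZ₁).inter_nonempty_of_inter_upSet_nonempty
      ⟨x, ⟨hxA, hx⟩, (hGup hxG).1⟩).ne_empty hmiss₁
  · exact ((hAcl.inter hZ₂).inter_nonempty_of_inter_upSet_nonempty
      ⟨x, ⟨hxA, hx⟩, (hGup hxG).2⟩).ne_empty hmiss₂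

end MeetsAll

theorem stmt10 {X : Type*} [TopologicalSpace X]
    (𝓕 : Set (Set X)) (h𝓕 : 𝓕.Nonempty) (hc : ∀ F ∈ 𝓕, IsCompact F)
    (hfil : ∀ F₁ ∈ 𝓕, ∀ F₂ ∈ 𝓕, ∃ F ∈ 𝓕, F ⊆ upSet F₁ ∩ upSet F₂)
    (C : Set X) (hC : IsClosed C) (hmeets : ∀ F ∈ 𝓕, (C ∩ F).Nonempty) :
    ∃ A : Set X, A ⊆ C ∧ IsClosed A ∧ IsIrreducible A ∧
      (∀ F ∈ 𝓕, (A ∩ F).Nonempty) ∧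
      (∀ A' : Set X, A' ⊆ A → IsClosed A' → A' ≠ A → ∃ F ∈ 𝓕, A' ∩ F = ∅) := by
  obtain ⟨A, hAC, hA⟩ := exists_minimal_isClosed_meetsAll_subset hc hC hmeets
  exact ⟨A, hAC, hA.prop.1, isIrreducible_of_minimal_meetsAll h𝓕 hfil hA, hA.prop.2,
    fun _ hA'A hA' hne => exists_eq_empty_of_minimal_meetsAll hA hA'A hA' hne⟩
end

section
/- Let W be a subspace of a sober space X. Suppose {K_i}_{i∈I} is a filtered family of compact saturated subsets of the subspace W, and U is an open set of X with ⋂_{i∈I} K_i ⊆ U but K_i ⊄ U for all i ∈ I. Then there exists a point e ∈ (X − W) ∩ (X − U) such that ⋂_{i∈I} ↑_X(↓_X e ∩ K_i) = ↑_X e. -/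
open Set

lemma downSet_singleton_s11 {X : Type*} [TopologicalSpace X] (e : X) :
    downSet ({e} : Set X) = closure {e} := by
  ext z
  constructor
  · rintro ⟨x, hx, hz⟩
    rcases hx with rfl
    exact hz
  · intro hz
    exact ⟨e, rfl, hz⟩

theorem stmt11 {X : Type*} [TopologicalSpace X] [T0Space X] [QuasiSober X]
    (W : Set X) {ι : Type*} [Nonempty ι] (K : ι → Set X)
    (hsub : ∀ i, K i ⊆ W) (hc : ∀ i, IsCompact (K i))
    (hs : ∀ i, sat (K i) ∩ W = K i)
    (hfil : ∀ i j : ι, ∃ k : ι, K k ⊆ K i ∩ K j)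
    (U : Set X) (hU : IsOpen U) (hint : (⋂ i, K i) ⊆ U) (hnot : ∀ i, ¬ K i ⊆ U) :
    ∃ e : X, e ∉ W ∧ e ∉ U ∧ ⋂ i, upSet (downSet {e} ∩ K i) = upSet {e} := by
  classical
  set S : Set (Set X) := {A | IsClosed A ∧ A ⊆ Uᶜ ∧ ∀ i, (A ∩ K i).Nonempty} with hS
  -- `Uᶜ` belongs to `S`
  have hUc : Uᶜ ∈ S := by
    refine ⟨hU.isClosed_compl, Subset.rfl, fun i => ?_⟩
    rcases not_subset.1 (hnot i) with ⟨x, hxK, hxU⟩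
    exact ⟨x, hxU, hxK⟩
  -- Zorn's lemma gives a minimal element of `S`
  obtain ⟨m, -, hmS, hmin⟩ : ∃ m, m ⊆ Uᶜ ∧ Minimal (· ∈ S) m := by
    apply zorn_superset_nonempty S ?_ Uᶜ hUc
    intro c hcS hchain hcne
    refine ⟨⋂₀ c, ⟨isClosed_sInter fun A hA => (hcS hA).1, ?_, fun i => ?_⟩,
      fun s hs' => sInter_subset_of_mem hs'⟩
    · obtain ⟨A, hA⟩ := hcne
      exact (sInter_subset_of_mem hA).trans (hcS hA).2.1
    · rw [sInter_eq_iInter, inter_comm]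
      apply (hc i).inter_iInter_nonempty (fun A : c => (A : Set X))
        (fun A => (hcS A.2).1)
      intro u
      rcases u.eq_empty_or_nonempty with rfl | hu
      · simp only [Finset.notMem_empty, iInter_of_empty, iInter_univ, inter_univ]
        rcases not_subset.1 (hnot i) with ⟨x, hxK, -⟩
        exact ⟨x, hxK⟩
      · obtain ⟨A, hAu, hAmin⟩ := u.exists_minimal hu
        have hAsub : ∀ B ∈ u, (A : Set X) ⊆ B := by
          intro B hBu
          rcases eq_or_ne A B with rfl | hne
          · exact Subset.rfl
          · rcases hchain A.2 B.2 (fun h => hne (Subtype.ext h)) with h | h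
            · exact h
            · rcases h.eq_or_lt with h' | h'
              · exact h'.ge
              · exact absurd (hAmin hBu (Subtype.coe_lt_coe.1 h').le) (not_le_of_gt (Subtype.coe_lt_coe.1 h'))
        obtain ⟨x, hx⟩ := ((hcS A.2).2.2 i)
        exact ⟨x, hx.2, mem_iInter₂.2 fun B hB => hAsub B hB hx.1⟩
  obtain ⟨hmcl, hmU, hmK⟩ := hmS
  -- `m` is irreducible
  have hirr : IsIrreducible m := by
    constructor
    · obtain ⟨x, hx⟩ := hmK (Classical.arbitrary ι)
      exact ⟨x, hx.1⟩
    · intro V₁ V₂ hV₁ hV₂ ⟨x₁, hx₁m, hx₁⟩ ⟨x₂, hx₂m, hx₂⟩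
      by_contra hemp
      rw [Set.not_nonempty_iff_eq_empty] at hemp
      -- both `m \ V₁` and `m \ V₂` are proper closed subsets, so each misses some `K i`
      have key : ∀ V : Set X, IsOpen V → (m ∩ V).Nonempty →
          ∃ i, ((m ∩ Vᶜ) ∩ K i) = ∅ := by
        intro V hV ⟨x, hxm, hxV⟩
        by_contra h
        push_neg at h
        have hmem : m ∩ Vᶜ ∈ S :=
          ⟨hmcl.inter hV.isClosed_compl, (inter_subset_left).trans hmU,
            fun i => h i⟩
        have := hmin hmem (inter_subset_left)
        have hxbad : x ∈ m ∩ Vᶜ := this hxm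
        exact hxbad.2 hxV
      obtain ⟨i, hi⟩ := key V₁ hV₁ ⟨x₁, hx₁m, hx₁⟩
      obtain ⟨j, hj⟩ := key V₂ hV₂ ⟨x₂, hx₂m, hx₂⟩
      obtain ⟨k, hk⟩ := hfil i j
      obtain ⟨x, hxm, hxK⟩ := hmK k
      have hxi : x ∈ K i := (hk hxK).1
      have hxj : x ∈ K j := (hk hxK).2
      by_cases hxV₁ : x ∈ V₁
      · by_cases hxV₂ : x ∈ V₂
        · have hx : x ∈ m ∩ (V₁ ∩ V₂) := ⟨hxm, hxV₁, hxV₂⟩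
          rw [hemp] at hx; exact hx
        · have hx : x ∈ (m ∩ V₂ᶜ) ∩ K j := ⟨⟨hxm, hxV₂⟩, hxj⟩
          rw [hj] at hx; exact hx
      · have hx : x ∈ (m ∩ V₁ᶜ) ∩ K i := ⟨⟨hxm, hxV₁⟩, hxi⟩
        rw [hi] at hx; exact hx
  -- sobriety: `m` is the closure of a point `e`
  obtain ⟨e, he⟩ := QuasiSober.sober hirr hmcl
  have hem : closure ({e} : Set X) = m := he
  have heM : e ∈ m := by rw [← hem]; exact subset_closure rfl
  have heU : e ∉ U := fun h => hmU heM h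
  -- for each i, `closure {e} ∩ K i` is nonempty
  have hmeets : ∀ i, (closure ({e} : Set X) ∩ K i).Nonempty := by
    intro i; rw [hem]; exact hmK i
  -- `e ∉ W`
  have heW : e ∉ W := by
    intro heW
    have hesat : ∀ i, e ∈ sat (K i) := by
      intro i
      intro V ⟨hVopen, hKV⟩
      obtain ⟨x, hxe, hxK⟩ := hmeets i
      have hxV : x ∈ V := hKV hxK
      rcases mem_closure_iff.1 hxe V hVopen hxV with ⟨y, hyV, hy⟩
      rcases hy with rfl
      exact hyV
    have : e ∈ ⋂ i, K i := mem_iInter.2 fun i => by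
      rw [← hs i]; exact ⟨hesat i, heW⟩
    exact heU (hint this)
  refine ⟨e, heW, heU, ?_⟩
  rw [downSet_singleton_s11]
  apply Subset.antisymm
  · -- hard direction: uses minimality of `m`
    intro y hy
    have hmy : ∀ i, ((m ∩ closure {y}) ∩ K i).Nonempty := by
      intro i
      obtain ⟨x, ⟨hx1, hx2⟩, hx3⟩ := mem_iInter.1 hy i
      exact ⟨x, ⟨by rw [← hem]; exact hx1, hx3⟩, hx2⟩
    have hmem : m ∩ closure {y} ∈ S :=
      ⟨hmcl.inter isClosed_closure, (inter_subset_left).trans hmU, hmy⟩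
    have := hmin hmem (inter_subset_left)
    have hecy : e ∈ closure ({y} : Set X) := (this heM).2
    exact ⟨e, rfl, hecy⟩
  · -- easy direction
    rintro y ⟨x, hx, hxy⟩
    have hey : specLE e y := by rw [← mem_singleton_iff.1 hx]; exact hxy
    refine mem_iInter.2 fun i => ?_
    obtain ⟨z, hze, hzK⟩ := hmeets i
    have hcl : closure ({e} : Set X) ⊆ closure ({y} : Set X) :=
      closure_minimal (singleton_subset_iff.2 hey) isClosed_closure
    exact ⟨z, ⟨hze, hzK⟩, hcl hze⟩
end

section
/- Let f : X → Y be a continuous map between sober spaces. For any subspace Z ⊆ Y that is well-filtered (as a topological space with the subspace topology), the preimage f⁻¹(Z), with the subspace topology from X, is well-filtered. -/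
open Set

section SatLemmas

variable {α : Type*} [TopologicalSpace α]

lemma subset_sat (A : Set α) : A ⊆ sat A := fun a ha => by
  intro U hU; exact hU.2 ha

lemma sat_subset_open {A U : Set α} (hU : IsOpen U) (h : A ⊆ U) : sat A ⊆ U :=
  sInter_subset_of_mem ⟨hU, h⟩

lemma sat_mono {A B : Set α} (h : A ⊆ B) : sat A ⊆ sat B := fun a ha U hU =>
  ha U ⟨hU.1, h.trans hU.2⟩

lemma sat_sat (A : Set α) : sat (sat A) = sat A := by
  refine le_antisymm (fun a ha U hU => ?_) (subset_sat _)
  exact ha U ⟨hU.1, sat_subset_open hU.1 hU.2⟩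

lemma IsCompact.sat' {A : Set α} (h : IsCompact A) : IsCompact (sat A) := by
  refine isCompact_of_finite_subcover fun U hU hsub => ?_
  obtain ⟨t, ht⟩ := h.elim_finite_subcover U hU ((subset_sat A).trans hsub)
  exact ⟨t, sat_subset_open (isOpen_biUnion fun i _ => hU i) ht⟩

lemma mem_sat_exists {A : Set α} {z : α} (hz : z ∈ sat A) :
    ∃ a ∈ A, a ∈ closure ({z} : Set α) := by
  by_contra hcon
  push_neg at hcon
  have hz' := hz ((closure ({z} : Set α))ᶜ) ⟨isClosed_closure.isOpen_compl,
    fun a ha => hcon a ha⟩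
  exact hz' (subset_closure rfl)

/-- A set with `sat K = K` is upward closed w.r.t. specialization. -/
lemma sat_eq_up_closed {K : Set α} (hK : sat K = K) {k y : α}
    (hk : k ∈ K) (hky : k ∈ closure ({y} : Set α)) : y ∈ K := by
  rw [← hK]
  intro U hU
  have : k ∈ U := hU.2 hk
  rcases mem_closure_iff.mp hky U hU.1 this with ⟨w, hwU, hw⟩
  rwa [hw] at hwU

end SatLemmas

theorem stmt12 {X Y : Type*} [TopologicalSpace X] [TopologicalSpace Y]
    [T0Space X] [QuasiSober X] [T0Space Y] [QuasiSober Y]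
    (f : X → Y) (hf : Continuous f) (Z : Set Y)
    (hZ : WellFilteredSpace ↥Z) :
    WellFilteredSpace ↥(f ⁻¹' Z) := by
  set W : Set X := f ⁻¹' Z with hW
  intro 𝓕 hne hcs hfil U hUopen hsub
  by_contra hcon
  push_neg at hcon
  -- U comes from an open set V of X
  obtain ⟨V, hVopen, hVU⟩ := isOpen_induced_iff.mp hUopen
  -- image in X of a K
  let ix : Set ↥W → Set X := fun K => (Subtype.val : ↥W → X) '' K
  have hixcompact : ∀ K ∈ 𝓕, IsCompact (ix K) := fun K hK =>
    ((hcs K hK).1.image continuous_subtype_val)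
  -- the Rudin family
  set 𝒜 : Set (Set X) := {A | IsClosed A ∧ A ⊆ Vᶜ ∧ ∀ K ∈ 𝓕, (A ∩ ix K).Nonempty} with h𝒜
  have hVc : Vᶜ ∈ 𝒜 := by
    refine ⟨hVopen.isClosed_compl, le_refl _, fun K hK => ?_⟩
    have : ¬ K ⊆ U := hcon K hK
    rcases not_subset.mp this with ⟨k, hkK, hkU⟩
    refine ⟨k.val, fun hkV => ?_, ⟨k, hkK, rfl⟩⟩
    rw [← hVU] at hkU
    exact hkU hkV
  -- Zorn's lemma: minimal element of 𝒜
  obtain ⟨C, hCsub, hCmin⟩ := zorn_superset_nonempty 𝒜 (fun c hc𝒜 hchain hcne => by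
    refine ⟨⋂₀ c, ⟨isClosed_sInter fun A hA => (hc𝒜 hA).1,
      (sInter_subset_of_mem hcne.choose_spec).trans (hc𝒜 hcne.choose_spec).2.1,
      fun K hK => ?_⟩, fun s hs => sInter_subset_of_mem hs⟩
    -- intersection of a chain of closed sets each meeting the compact ix K
    haveI : Nonempty c := ⟨⟨hcne.choose, hcne.choose_spec⟩⟩
    have hdir : Directed (· ⊇ ·) (fun A : c => (A : Set X)) := by
      rintro ⟨A, hA⟩ ⟨B, hB⟩
      rcases hchain.total hA hB with h | h
      · exact ⟨⟨A, hA⟩, le_refl _, h⟩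
      · exact ⟨⟨B, hB⟩, h, le_refl _⟩
    by_contra hempty
    rw [not_nonempty_iff_eq_empty] at hempty
    have h0 : (ix K ∩ ⋂ A : c, (A : Set X)) = ∅ := by
      rw [eq_empty_iff_forall_notMem]
      rintro p ⟨hpK, hpA⟩
      rw [eq_empty_iff_forall_notMem] at hempty
      exact hempty p ⟨fun A hA => by simpa using mem_iInter.mp hpA ⟨A, hA⟩, hpK⟩
    obtain ⟨A, hA0⟩ := (hixcompact K hK).elim_directed_family_closed _
      (fun A : c => (hc𝒜 A.2).1) h0 hdir
    obtain ⟨q, hq⟩ := (hc𝒜 A.2).2.2 K hK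
    rw [eq_empty_iff_forall_notMem] at hA0
    exact hA0 q ⟨hq.2, hq.1⟩)
    Vᶜ hVc
  obtain ⟨hCclosed, hCVc, hCmeets⟩ := hCmin.1
  -- C is irreducible
  obtain ⟨K₀, hK₀⟩ := hne
  have hCne : C.Nonempty := ((hCmeets K₀ hK₀).mono inter_subset_left)
  have hCirr : IsIrreducible C := by
    refine ⟨hCne, fun U₁ U₂ hU₁ hU₂ ⟨a₁, ha₁C, ha₁⟩ ⟨a₂, ha₂C, ha₂⟩ => ?_⟩
    -- C \ Uᵢ is a proper closed subset, hence misses some Kᵢ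
    have key : ∀ (V' : Set X), IsOpen V' → (C ∩ V').Nonempty →
        ∃ K ∈ 𝓕, C ∩ ix K ⊆ V' := by
      intro V' hV' ⟨a, haC, haV'⟩
      by_contra hno
      push_neg at hno
      have hmem : C \ V' ∈ 𝒜 := ⟨hCclosed.sdiff hV', (diff_subset.trans hCVc),
        fun K hK => by
          rcases not_subset.mp (hno K hK) with ⟨p, hp, hpV'⟩
          exact ⟨p, ⟨⟨hp.1, hpV'⟩, hp.2⟩⟩⟩
      have hle := hCmin.2 hmem diff_subset
      exact (hle haC).2 haV'
    obtain ⟨K₁, hK₁, hC₁⟩ := key U₁ hU₁ ⟨a₁, ha₁C, ha₁⟩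
    obtain ⟨K₂, hK₂, hC₂⟩ := key U₂ hU₂ ⟨a₂, ha₂C, ha₂⟩
    obtain ⟨K₃, hK₃, hK₃sub⟩ := hfil K₁ hK₁ K₂ hK₂
    obtain ⟨p, hpC, hpK₃⟩ := hCmeets K₃ hK₃
    have hix : ix K₃ ⊆ ix K₁ ∩ ix K₂ := by
      rintro _ ⟨k, hk, rfl⟩
      exact ⟨⟨k, (hK₃sub hk).1, rfl⟩, ⟨k, (hK₃sub hk).2, rfl⟩⟩
    exact ⟨p, hpC, hC₁ ⟨hpC, (hix hpK₃).1⟩, hC₂ ⟨hpC, (hix hpK₃).2⟩⟩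
  -- generic point
  obtain ⟨x, hx⟩ := QuasiSober.sober hCirr hCclosed
  have hxC : x ∈ C := hx ▸ subset_closure rfl
  have hclx : closure ({x} : Set X) = C := hx
  -- the map g : W → Z
  let g : ↥W → ↥Z := fun w => ⟨f w.val, w.2⟩
  have hg : Continuous g := Continuous.subtype_mk (hf.comp continuous_subtype_val) _
  -- the sets K ∩ val⁻¹ C in W
  let KC : Set ↥W → Set ↥W := fun K => K ∩ (Subtype.val ⁻¹' C)
  have hKCne : ∀ K ∈ 𝓕, (KC K).Nonempty := by
    intro K hK
    obtain ⟨p, hpC, k, hkK, rfl⟩ := hCmeets K hK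
    exact ⟨k, hkK, hpC⟩
  have hKCcompact : ∀ K ∈ 𝓕, IsCompact (KC K) :=
    fun K hK => (hcs K hK).1.inter_right (hCclosed.preimage continuous_subtype_val)
  -- the family in Z
  set 𝓖 : Set (Set ↥Z) := (fun K => sat (g '' KC K)) '' 𝓕 with h𝓖
  -- x is in W: suppose not
  by_cases hfx : f x ∈ Z
  · -- then x ∈ every K, contradiction with ⋂₀ 𝓕 ⊆ U and x ∈ Vᶜ
    set xw : ↥W := ⟨x, hfx⟩ with hxw
    have hxK : ∀ K ∈ 𝓕, xw ∈ K := by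
      intro K hK
      obtain ⟨k, hkK, hkC⟩ := hKCne K hK
      have hkclx : k ∈ closure ({xw} : Set ↥W) := by
        rw [closure_subtype]
        simpa [hclx, hxw] using hkC
      exact sat_eq_up_closed (hcs K hK).2 hkK hkclx
    have hxU : xw ∈ U := hsub (fun K hK => hxK K hK)
    rw [← hVU] at hxU
    exact hCVc hxC hxU
  · -- f x ∉ Z : use well-filteredness of Z
    -- the open set O in Z
    set O : Set ↥Z := (Subtype.val : ↥Z → Y) ⁻¹' (closure ({f x} : Set Y))ᶜ with hO
    have hOopen : IsOpen O := isClosed_closure.isOpen_compl.preimage continuous_subtype_val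
    have h𝓖ne : 𝓖.Nonempty := ⟨_, ⟨K₀, hK₀, rfl⟩⟩
    have h𝓖cs : ∀ G ∈ 𝓖, IsCompact G ∧ sat G = G := by
      rintro _ ⟨K, hK, rfl⟩
      exact ⟨((hKCcompact K hK).image hg).sat', sat_sat _⟩
    have h𝓖fil : ∀ G₁ ∈ 𝓖, ∀ G₂ ∈ 𝓖, ∃ G₃ ∈ 𝓖, G₃ ⊆ G₁ ∩ G₂ := by
      rintro _ ⟨K₁, hK₁, rfl⟩ _ ⟨K₂, hK₂, rfl⟩
      obtain ⟨K₃, hK₃, hK₃sub⟩ := hfil K₁ hK₁ K₂ hK₂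
      refine ⟨_, ⟨K₃, hK₃, rfl⟩, subset_inter ?_ ?_⟩
      · exact sat_mono (image_mono (f := g) (inter_subset_inter_left _ (hK₃sub.trans inter_subset_left)))
      · exact sat_mono (image_mono (f := g) (inter_subset_inter_left _ (hK₃sub.trans inter_subset_right)))
    have hOsub : ⋂₀ 𝓖 ⊆ O := by
      intro z hz
      by_contra hzO
      -- z.val ∈ closure {f x}
      have hzcl : (z : Y) ∈ closure ({f x} : Set Y) := not_not.mp hzO
      -- the closed set C ∩ f⁻¹(closure {z.val}) is in 𝒜 and ⊆ C, so equals C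
      have hmem : C ∩ f ⁻¹' closure ({(z : Y)} : Set Y) ∈ 𝒜 := by
        refine ⟨hCclosed.inter (isClosed_closure.preimage hf),
          inter_subset_left.trans hCVc, fun K hK => ?_⟩
        have hzK := hz _ ⟨K, hK, rfl⟩
        obtain ⟨_, ⟨k, hkKC, rfl⟩, hgk⟩ := mem_sat_exists hzK
        rw [closure_subtype] at hgk
        simp only [image_singleton] at hgk
        exact ⟨k.val, ⟨⟨hkKC.2, hgk⟩, ⟨k, hkKC.1, rfl⟩⟩⟩
      have hCeq := hCmin.2 hmem inter_subset_left
      have hfxz : f x ∈ closure ({(z : Y)} : Set Y) := by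
        have : x ∈ C ∩ f ⁻¹' closure ({(z : Y)} : Set Y) := hCeq hxC
        exact this.2
      -- mutual specialization ⇒ equal in T0
      have h1 : closure ({f x} : Set Y) ⊆ closure ({(z : Y)} : Set Y) :=
        closure_minimal (singleton_subset_iff.mpr hfxz) isClosed_closure
      have h2 : closure ({(z : Y)} : Set Y) ⊆ closure ({f x} : Set Y) :=
        closure_minimal (singleton_subset_iff.mpr hzcl) isClosed_closure
      have : f x = (z : Y) := by
        have hins : Inseparable (f x) ((z : Y)) :=
          (inseparable_iff_closure_eq).mpr (le_antisymm h1 h2)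
        exact hins.eq
      exact hfx (this ▸ z.2)
    obtain ⟨_, ⟨K, hK, rfl⟩, hGO⟩ := hZ 𝓖 h𝓖ne h𝓖cs h𝓖fil O hOopen hOsub
    obtain ⟨k, hkK, hkC⟩ := hKCne K hK
    have hgk : g k ∈ O := hGO (subset_sat _ ⟨k, ⟨hkK, hkC⟩, rfl⟩)
    -- but f k.val ∈ closure {f x} since k.val ∈ C = closure {x}
    have : f k.val ∈ closure ({f x} : Set Y) := by
      have hkclx : (k : X) ∈ closure ({x} : Set X) := by rwa [hclx]
      have := image_closure_subset_closure_image hf (s := ({x} : Set X))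
      have := this ⟨k.val, hkclx, rfl⟩
      simpa using this
    exact hgk this
end

section
/- Every sober space is well-filtered: if X is a T0 space in which every nonempty irreducible closed set is the closure of a unique point, then for every filtered family 𝓕 of compact saturated subsets of X and every open U with ⋂𝓕 ⊆ U, there exists F ∈ 𝓕 with F ⊆ U. -/
open Set

/-- A compact set meets the intersection of a nonempty chain of closed sets
provided it meets each of them. -/
lemma aux_chain_inter {X : Type*} [TopologicalSpace X] (c : Set (Set X)) (K : Set X)
    (hK : IsCompact K) (hchain : IsChain (· ⊆ ·) c) (hcne : c.Nonempty)
    (hclosed : ∀ A ∈ c, IsClosed A) (hmeets : ∀ A ∈ c, (A ∩ K).Nonempty) :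
    (⋂₀ c ∩ K).Nonempty := by
  have : (K ∩ ⋂ A : c, (A : Set X)).Nonempty := by
    refine hK.inter_iInter_nonempty _ (fun A => hclosed A A.2) ?_
    intro u
    rcases u.eq_empty_or_nonempty with rfl | hu
    · simp only [Finset.notMem_empty, iInter_of_empty, iInter_univ, inter_univ]
      obtain ⟨A, hA⟩ := hcne
      obtain ⟨x, hx1, hx2⟩ := hmeets A hA
      exact ⟨x, hx2⟩
    · obtain ⟨B, hBu, hBmin⟩ := Set.Finite.exists_minimalFor (Subtype.val) (↑u : Set c)
        u.finite_toSet (by exact_mod_cast hu)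
      have hB : ∀ A ∈ u, (B : Set X) ⊆ A := by
        intro A hA
        rcases hchain.total B.2 A.2 with h | h
        · exact h
        · exact hBmin hA h
      obtain ⟨x, hx1, hx2⟩ := hmeets B B.2
      exact ⟨x, hx2, mem_iInter₂.mpr fun A hA => hB A hA hx1⟩
  obtain ⟨x, hx1, hx2⟩ := this
  exact ⟨x, fun A hA => mem_iInter.mp hx2 ⟨A, hA⟩, hx1⟩

theorem stmt14 {X : Type*} [TopologicalSpace X] [T0Space X]
    (hsober : ∀ F : Set X, IsClosed F → IsIrreducible F → ∃! x : X, F = closure {x}) :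
    WellFilteredSpace X := by
  intro 𝓕 h𝓕ne hcs hfil U hU hsub
  by_contra hcon
  push_neg at hcon
  set S : Set (Set X) := {A | IsClosed A ∧ A ⊆ Uᶜ ∧ ∀ K ∈ 𝓕, (A ∩ K).Nonempty} with hSdef
  have hUc : Uᶜ ∈ S := by
    refine ⟨hU.isClosed_compl, subset_rfl, fun K hK => ?_⟩
    obtain ⟨y, hyK, hyU⟩ := not_subset.mp (hcon K hK)
    exact ⟨y, hyU, hyK⟩
  obtain ⟨A, hAU, ⟨hAcl, hAUc, hAmeet⟩, hAmin⟩ :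
      ∃ A, A ⊆ Uᶜ ∧ A ∈ S ∧ ∀ B ∈ S, B ⊆ A → A ⊆ B := by
    obtain ⟨A, hAU, hAmin⟩ := zorn_superset_nonempty S (fun c hcS hchain hcne =>
      ⟨⋂₀ c, ⟨isClosed_sInter fun A hA => (hcS hA).1,
        (sInter_subset_of_mem hcne.choose_spec).trans (hcS hcne.choose_spec).2.1,
        fun K hK => aux_chain_inter c K (hcs K hK).1 hchain hcne
          (fun A hA => (hcS hA).1) (fun A hA => (hcS hA).2.2 K hK)⟩,
        fun s hs => sInter_subset_of_mem hs⟩) _ hUc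
    exact ⟨A, hAU, hAmin.1, fun B hB hBA => hAmin.2 hB hBA⟩
  -- A is irreducible
  have hAne : A.Nonempty := by
    obtain ⟨K, hK⟩ := h𝓕ne
    obtain ⟨x, hx, _⟩ := hAmeet K hK
    exact ⟨x, hx⟩
  have hirr : IsIrreducible A := by
    refine ⟨hAne, isPreirreducible_iff_isClosed_union_isClosed.mpr ?_⟩
    intro F₁ F₂ hF₁ hF₂ hAsub
    by_contra hne
    push_neg at hne
    obtain ⟨hn1, hn2⟩ := hne
    have h1 : A ∩ F₁ ∉ S := fun h =>
      hn1 fun x hx => ((hAmin _ h inter_subset_left) hx).2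
    have h2 : A ∩ F₂ ∉ S := fun h =>
      hn2 fun x hx => ((hAmin _ h inter_subset_left) hx).2
    have e1 : ∃ K ∈ 𝓕, A ∩ F₁ ∩ K = ∅ := by
      by_contra h
      push_neg at h
      exact h1 ⟨hAcl.inter hF₁, inter_subset_left.trans hAUc,
        fun K hK => h K hK⟩
    have e2 : ∃ K ∈ 𝓕, A ∩ F₂ ∩ K = ∅ := by
      by_contra h
      push_neg at h
      exact h2 ⟨hAcl.inter hF₂, inter_subset_left.trans hAUc,
        fun K hK => h K hK⟩
    obtain ⟨K₁, hK₁, hK₁e⟩ := e1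
    obtain ⟨K₂, hK₂, hK₂e⟩ := e2
    obtain ⟨K₃, hK₃, hK₃s⟩ := hfil K₁ hK₁ K₂ hK₂
    obtain ⟨x, hxA, hxK₃⟩ := hAmeet K₃ hK₃
    rcases hAsub hxA with h | h
    · have : x ∈ A ∩ F₁ ∩ K₁ := ⟨⟨hxA, h⟩, (hK₃s hxK₃).1⟩
      rw [hK₁e] at this; exact this
    · have : x ∈ A ∩ F₂ ∩ K₂ := ⟨⟨hxA, h⟩, (hK₃s hxK₃).2⟩
      rw [hK₂e] at this; exact this
  obtain ⟨x, hx, -⟩ := hsober A hAcl hirr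
  -- x belongs to every K ∈ 𝓕
  have hxK : ∀ K ∈ 𝓕, x ∈ K := by
    intro K hK
    obtain ⟨y, hyA, hyK⟩ := hAmeet K hK
    rw [← (hcs K hK).2]
    intro V ⟨hVopen, hKV⟩
    have hy : y ∈ closure ({x} : Set X) := hx ▸ hyA
    have := mem_closure_iff.mp hy V hVopen (hKV hyK)
    obtain ⟨z, hzV, hz⟩ := this
    rwa [mem_singleton_iff.mp hz] at hzV
  have hxU : x ∈ U := hsub (mem_sInter.mpr hxK)
  have hxA : x ∈ A := hx ▸ subset_closure rfl
  exact hAUc hxA hxU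
end
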